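/- Let 1 < p < 2, μ₀ > 0, and let μ : ℝ × ℝ³ × [0,∞) → ℝ satisfy: d ↦ μ(o,e,d) is monotone increasing on [0,∞) and μ(o,e,d) ≥ μ₀ for all arguments. Define F(λ₀, λ₁, λ₂) = 2 μ(λ₀, λ₁, |λ₂|) |λ₂|^(p-2) λ₂ for λ₂ ≠ 0 and F(λ₀, λ₁, 0) = 0 on ℝ^(3×3). Then for each fixed (λ₀, λ₁), the map λ₂ ↦ F(λ₀, λ₁, λ₂) is monotone: ⟪F(λ₀, λ₁, A) - F(λ₀, λ₁, B), A - B⟫ ≥ 0 for all A, B ∈ ℝ^(3×3). -/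
import Mathlib


/-- Frobenius norm of a 3×3 real matrix. -/
noncomputable def fnorm (A : Matrix (Fin 3) (Fin 3) ℝ) : ℝ :=
  Real.sqrt (∑ i, ∑ j, (A i j) ^ 2)

/-- Frobenius inner product of 3×3 real matrices. -/
noncomputable def finner (A B : Matrix (Fin 3) (Fin 3) ℝ) : ℝ :=
  ∑ i, ∑ j, A i j * B i j

lemma fnorm_nonneg (A : Matrix (Fin 3) (Fin 3) ℝ) : 0 ≤ fnorm A :=
  Real.sqrt_nonneg _

lemma finner_self (A : Matrix (Fin 3) (Fin 3) ℝ) : finner A A = fnorm A ^ 2 := by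
  rw [fnorm, Real.sq_sqrt (by positivity)]
  simp [finner, sq]

lemma fnorm_pos (A : Matrix (Fin 3) (Fin 3) ℝ) (hA : A ≠ 0) : 0 < fnorm A := by
  obtain ⟨i, j, hij⟩ : ∃ i j, A i j ≠ 0 := by
    by_contra h; push_neg at h; exact hA (by ext i j; simpa using h i j)
  apply Real.sqrt_pos.2
  refine Finset.sum_pos' (fun i _ => Finset.sum_nonneg fun j _ => sq_nonneg _)
    ⟨i, Finset.mem_univ i, Finset.sum_pos' (fun j _ => sq_nonneg _)
      ⟨j, Finset.mem_univ j, by positivity⟩⟩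

lemma finner_le (A B : Matrix (Fin 3) (Fin 3) ℝ) : finner A B ≤ fnorm A * fnorm B := by
  have h := Real.sum_mul_le_sqrt_mul_sqrt (Finset.univ : Finset (Fin 3 × Fin 3))
    (fun ij => A ij.1 ij.2) (fun ij => B ij.1 ij.2)
  simpa [finner, fnorm, Fintype.sum_prod_type] using h

lemma finner_expand (cA cB : ℝ) (A B : Matrix (Fin 3) (Fin 3) ℝ) :
    finner (cA • A - cB • B) (A - B)
      = cA * finner A A - (cA + cB) * finner A B + cB * finner B B := by
  simp only [finner, Matrix.sub_apply, Matrix.smul_apply, smul_eq_mul, Finset.mul_sum,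
    ← Finset.sum_sub_distrib, ← Finset.sum_add_distrib]
  exact Finset.sum_congr rfl fun i _ => Finset.sum_congr rfl fun j _ => by ring

/-- Monotonicity of the generalized power-law operator with variable viscosity,
`p ∈ (1,2)`: if `d ↦ μ(o,e,d)` is monotone increasing and `μ ≥ μ₀ > 0`, then
for each fixed `(λ₀,λ₁)` the map `λ₂ ↦ F(λ₀,λ₁,λ₂)` is monotone. -/
theorem stmt7 (p μ₀ : ℝ) (hp1 : 1 < p) (hp2 : p < 2) (hμ₀ : 0 < μ₀)
    (μ : ℝ → (Fin 3 → ℝ) → ℝ → ℝ)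
    (hmono : ∀ (o : ℝ) (e : Fin 3 → ℝ) (d d' : ℝ), 0 ≤ d → d ≤ d' → μ o e d ≤ μ o e d')
    (hlb : ∀ (o : ℝ) (e : Fin 3 → ℝ) (d : ℝ), 0 ≤ d → μ₀ ≤ μ o e d)
    (F : ℝ → (Fin 3 → ℝ) → Matrix (Fin 3) (Fin 3) ℝ → Matrix (Fin 3) (Fin 3) ℝ)
    (hF0 : ∀ o e, F o e 0 = 0)
    (hF : ∀ o e (A : Matrix (Fin 3) (Fin 3) ℝ), A ≠ 0 →
      F o e A = (2 * μ o e (fnorm A) * fnorm A ^ (p - 2)) • A) :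
    ∀ o e (A B : Matrix (Fin 3) (Fin 3) ℝ),
      0 ≤ finner (F o e A - F o e B) (A - B) := by
  intro o e A B
  have hc : ∀ X : Matrix (Fin 3) (Fin 3) ℝ,
      0 ≤ 2 * μ o e (fnorm X) * fnorm X ^ (p - 2) := fun X =>
    mul_nonneg (mul_nonneg (by norm_num)
      (le_trans hμ₀.le (hlb o e _ (fnorm_nonneg X))))
      (Real.rpow_nonneg (fnorm_nonneg X) _)
  by_cases hA : A = 0
  · subst hA
    by_cases hB : B = 0
    · subst hB; simp [hF0, finner]
    · set c := 2 * μ o e (fnorm B) * fnorm B ^ (p - 2) with hcdef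
      have h0 : F o e 0 = c • (0 : Matrix (Fin 3) (Fin 3) ℝ) := by simp [hF0]
      rw [h0, hF o e B hB, finner_expand]
      have h1 : finner (0 : Matrix (Fin 3) (Fin 3) ℝ) 0 = 0 := by simp [finner]
      have h2 : finner (0 : Matrix (Fin 3) (Fin 3) ℝ) B = 0 := by simp [finner]
      rw [h1, h2, finner_self]
      have h3 : 0 ≤ c := hcdef ▸ hc B
      nlinarith [mul_nonneg h3 (sq_nonneg (fnorm B))]
  · by_cases hB : B = 0
    · subst hB
      set c := 2 * μ o e (fnorm A) * fnorm A ^ (p - 2) with hcdef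
      have h0 : F o e 0 = c • (0 : Matrix (Fin 3) (Fin 3) ℝ) := by simp [hF0]
      rw [h0, hF o e A hA, finner_expand]
      have h2 : finner A (0 : Matrix (Fin 3) (Fin 3) ℝ) = 0 := by simp [finner]
      have h1 : finner (0 : Matrix (Fin 3) (Fin 3) ℝ) 0 = 0 := by simp [finner]
      rw [h1, h2, finner_self]
      have h3 : 0 ≤ c := hcdef ▸ hc A
      nlinarith [mul_nonneg h3 (sq_nonneg (fnorm A))]
    · rw [hF o e A hA, hF o e B hB, finner_expand, finner_self, finner_self]
      set a := fnorm A with hadef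
      set b := fnorm B with hbdef
      have ha : 0 < a := fnorm_pos A hA
      have hb : 0 < b := fnorm_pos B hB
      set cA := 2 * μ o e a * a ^ (p - 2) with hcAdef
      set cB := 2 * μ o e b * b ^ (p - 2) with hcBdef
      have hcAn : 0 ≤ cA := hcAdef ▸ hc A
      have hcBn : 0 ≤ cB := hcBdef ▸ hc B
      have hcs : finner A B ≤ a * b := finner_le A B
      have hra : a ^ (p - 2) * a = a ^ (p - 1) := by
        rw [show p - 1 = (p - 2) + 1 by ring, Real.rpow_add_one ha.ne']
      have hrb : b ^ (p - 2) * b = b ^ (p - 1) := by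
        rw [show p - 1 = (p - 2) + 1 by ring, Real.rpow_add_one hb.ne']
      -- key: (a - b) * (cA * a - cB * b) ≥ 0
      have key : 0 ≤ (a - b) * (cA * a - cB * b) := by
        have hAB : cA * a = 2 * μ o e a * a ^ (p - 1) := by
          rw [hcAdef, mul_assoc, hra]
        have hBB : cB * b = 2 * μ o e b * b ^ (p - 1) := by
          rw [hcBdef, mul_assoc, hrb]
        rcases le_total a b with hle | hle
        · have hμle : μ o e a ≤ μ o e b := hmono o e a b ha.le hle
          have hrle : a ^ (p - 1) ≤ b ^ (p - 1) :=
            Real.rpow_le_rpow ha.le hle (by linarith)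
          have h2 : cA * a ≤ cB * b := by
            rw [hAB, hBB]
            exact mul_le_mul (by linarith) hrle (Real.rpow_nonneg ha.le _)
              (by linarith [hμ₀, hlb o e b hb.le])
          nlinarith [mul_nonneg (sub_nonneg.2 hle) (sub_nonneg.2 h2)]
        · have hμle : μ o e b ≤ μ o e a := hmono o e b a hb.le hle
          have hrle : b ^ (p - 1) ≤ a ^ (p - 1) :=
            Real.rpow_le_rpow hb.le hle (by linarith)
          have h2 : cB * b ≤ cA * a := by
            rw [hAB, hBB]
            exact mul_le_mul (by linarith) hrle (Real.rpow_nonneg hb.le _)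
              (by linarith [hμ₀, hlb o e a ha.le])
          nlinarith [mul_nonneg (sub_nonneg.2 hle) (sub_nonneg.2 h2)]
      nlinarith [mul_le_mul_of_nonneg_left hcs (add_nonneg hcAn hcBn)]
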